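/- Fix Δx > 0, Δt = Δx/8, T > 0 a multiple of Δt, M_Δ > 0 and a compact set K ⊂ ℝ, and let U_{Δ,ad} be the set of all functions U_o : ℝ → [0,1] constant on each cell C_j = [(j−1/2)Δx, (j+1/2)Δx), with TV(U_o) ≤ M_Δ and support contained in K. Let J, I map L¹_loc(ℝ) to [0,∞) and K̃ map L¹_loc([0,T]×ℝ) to [0,∞), with J and K̃ continuous with respect to L¹_loc convergence and I lower semi-continuous with respect to L¹_loc convergence. For H > 0 define G_{Δ,H}(U_o) = J(U_H(T,·)) + K̃(U_H) + I(U_o), where U_H is the approximate solution produced by the nonlocal Eulerian–Lagrangian scheme with parameter H from the cell values of U_o, and G_Δ(U_o) = J(U(T,·)) + K̃(U) + I(U_o), where U is produced by the local Eulerian–Lagrangian scheme. Let H_n > 0 with H_n → 0, and for each n let U_o^n be a minimizer of G_{Δ,H_n} over U_{Δ,ad}. Then there exist a subsequence (U_o^{n_k}) and U_o ∈ U_{Δ,ad} such that ‖U_o^{n_k} − U_o‖_{L¹(ℝ)} → 0 and U_o is a minimizer of G_Δ over U_{Δ,ad}. -/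

import Mathlib

open MeasureTheory Filter

/-- One step of the Eulerian–Lagrangian scheme: given cell values `U` and
speeds `V`, with `h_j = Δx + Δt (V_{j+1} - V_j)` and
`F_j = (U_j + U_{j-1})(V_j + V_{j-1}) / h_{j-1}`, the update is
`U'_j = (U_{j-1} + 2U_j + U_{j+1})/4 + (Δt/4)(F_j - F_{j+1})`. -/
noncomputable def elStep (dx dt : ℝ) (U V : ℤ → ℝ) (j : ℤ) : ℝ :=
  (U (j - 1) + 2 * U j + U (j + 1)) / 4
    + (dt / 4) *
      ((U j + U (j - 1)) * (V j + V (j - 1)) / (dx + dt * (V j - V (j - 1)))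
        - (U (j + 1) + U j) * (V (j + 1) + V j) / (dx + dt * (V (j + 1) - V j)))

/-- The normalized discrete convolution with `η_H(x) = η(x/H)/H`, `N_H = ⌈H/Δx⌉`. -/
noncomputable def discConv (dx H : ℝ) (η : ℝ → ℝ) (f : ℤ → ℝ) (j : ℤ) : ℝ :=
  (∑ i ∈ Finset.range ⌈H / dx⌉₊, f (j + (i : ℤ)) * (η ((-(i : ℝ) * dx) / H) / H))
    / (∑ i ∈ Finset.range ⌈H / dx⌉₊, η ((-(i : ℝ) * dx) / H) / H)

/-- Iterates of the local Eulerian–Lagrangian scheme with speed `v(r) = 1 - r`. -/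
noncomputable def locIter (dx dt : ℝ) (U0 : ℤ → ℝ) : ℕ → ℤ → ℝ
  | 0 => U0
  | m + 1 => elStep dx dt (locIter dx dt U0 m) (fun j => 1 - locIter dx dt U0 m j)

/-- Iterates of the nonlocal Eulerian–Lagrangian scheme with speed
`v(r) = 1 - r` evaluated at the discrete convolution with kernel `η_H`. -/
noncomputable def nlocIter (dx dt H : ℝ) (η : ℝ → ℝ) (U0 : ℤ → ℝ) : ℕ → ℤ → ℝ
  | 0 => U0
  | m + 1 => elStep dx dt (nlocIter dx dt H η U0 m)
      (fun j => 1 - discConv dx H η (nlocIter dx dt H η U0 m) j)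

/-- Hypotheses on the kernel `η`: `C²` and non-decreasing on `[-1,0]`, vanishing
at `-1`, unit integral on `[-1,0]`, zero outside `[-1,0]`. -/
def KernelOK (η : ℝ → ℝ) : Prop :=
  ContDiffOn ℝ 2 η (Set.Icc (-1 : ℝ) 0) ∧ MonotoneOn η (Set.Icc (-1 : ℝ) 0) ∧
    η (-1) = 0 ∧ (∫ x in (-1 : ℝ)..0, η x) = 1 ∧ ∀ x, x ∉ Set.Icc (-1 : ℝ) 0 → η x = 0

/-- Index of the grid cell `C_j = [(j-1/2)Δx, (j+1/2)Δx)` containing `x`. -/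
noncomputable def cellIdx (dx x : ℝ) : ℤ := ⌊x / dx + 1 / 2⌋

/-- The piecewise constant approximate solution produced by the local
Eulerian–Lagrangian scheme (`Δt = Δx/8`) from the cell values of `U_o`:
`U(t,x) = U^m_j` for `x ∈ C_j`, `t ∈ [mΔt, (m+1)Δt)`. -/
noncomputable def locSol (dx : ℝ) (Uo : ℝ → ℝ) (t x : ℝ) : ℝ :=
  locIter dx (dx / 8) (fun j => Uo ((j : ℝ) * dx)) ⌊t / (dx / 8)⌋₊ (cellIdx dx x)

/-- The piecewise constant approximate solution produced by the nonlocal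
Eulerian–Lagrangian scheme with parameter `H` (`Δt = Δx/8`). -/
noncomputable def nlocSol (dx H : ℝ) (η : ℝ → ℝ) (Uo : ℝ → ℝ) (t x : ℝ) : ℝ :=
  nlocIter dx (dx / 8) H η (fun j => Uo ((j : ℝ) * dx)) ⌊t / (dx / 8)⌋₊ (cellIdx dx x)

/-- The discrete admissible set `U_{Δ,ad}`: functions with values in `[0,1]`,
constant on each grid cell `C_j = [(j-1/2)Δx, (j+1/2)Δx)`, with total variation
at most `M` and support contained in `K`. -/
def Uad (dx M : ℝ) (K : Set ℝ) : Set (ℝ → ℝ) :=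
  {U | (∀ x, U x ∈ Set.Icc (0 : ℝ) 1) ∧
    (∀ j : ℤ, ∀ x ∈ Set.Ico (((j : ℝ) - 1 / 2) * dx) (((j : ℝ) + 1 / 2) * dx),
      U x = U ((j : ℝ) * dx)) ∧
    eVariationOn U Set.univ ≤ ENNReal.ofReal M ∧
    Function.support U ⊆ K}

/-- Convergence in `L¹` on every compact subset of `ℝ`. -/
def L1locConv (f : ℕ → ℝ → ℝ) (g : ℝ → ℝ) : Prop :=
  ∀ R > (0 : ℝ), Tendsto (fun n => ∫ x in (-R)..R, |f n x - g x|) atTop (nhds 0)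

/-- Convergence in `L¹` on every compact subset of `[0,T] × ℝ`. -/
def L1locConvT (T : ℝ) (f : ℕ → ℝ → ℝ → ℝ) (g : ℝ → ℝ → ℝ) : Prop :=
  ∀ R > (0 : ℝ),
    Tendsto (fun n => ∫ t in (0 : ℝ)..T, ∫ x in (-R)..R, |f n t x - g t x|) atTop (nhds 0)

/-- The nonlocal discrete objective functional
`G_{Δ,H}(U_o) = J(U_H(T,·)) + K̃(U_H) + I(U_o)`. -/
noncomputable def Gnloc (dx H T : ℝ) (η : ℝ → ℝ)
    (J : (ℝ → ℝ) → ℝ) (Kt : (ℝ → ℝ → ℝ) → ℝ) (I : (ℝ → ℝ) → ℝ) (Uo : ℝ → ℝ) : ℝ :=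
  J (fun x => nlocSol dx H η Uo T x) + Kt (nlocSol dx H η Uo) + I Uo

/-- The local discrete objective functional
`G_Δ(U_o) = J(U(T,·)) + K̃(U) + I(U_o)`. -/
noncomputable def Gloc (dx T : ℝ)
    (J : (ℝ → ℝ) → ℝ) (Kt : (ℝ → ℝ → ℝ) → ℝ) (I : (ℝ → ℝ) → ℝ) (Uo : ℝ → ℝ) : ℝ :=
  J (fun x => locSol dx Uo T x) + Kt (locSol dx Uo) + I Uo

open Set Topology Function

/-!
Once `H < Δx` we have `N_H = 1`, and since `η(0) > 0` the discrete convolution is the identity: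
the nonlocal scheme *is* the local one, so for large `n` every `U_o^n` minimizes `G_Δ`, all with
the same value. An admissible datum is determined by its cell values in `[0,1]`, so by
compactness of `[0,1]^ℤ` a subsequence converges pointwise; the limit is admissible because
the total variation is lower semicontinuous. The local scheme keeps values in `[0,1]`, where
its denominators are at least `7Δx/8`, so finitely many steps depend continuously on the cell
values. Dominated convergence upgrades pointwise to `L¹_loc` convergence, and continuity of
`J`, `K̃` together with lower semicontinuity of `I` show that the limit value is at most the
common minimum.
-/

lemma KernelOK.apply_zero_pos {η : ℝ → ℝ} (hη : KernelOK η) : 0 < η 0 := by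
  obtain ⟨-, hmono, hη_neg_one, hint, -⟩ := hη
  by_contra! h
  have hzero : EqOn η 0 (uIcc (-1) 0) := by
    intro x hx
    rw [uIcc_of_le (by norm_num)] at hx
    show η x = 0
    exact le_antisymm ((hmono hx (right_mem_Icc.2 (by norm_num)) hx.2).trans h)
      (hη_neg_one ▸ hmono (left_mem_Icc.2 (by norm_num)) hx hx.1)
  simp [intervalIntegral.integral_congr hzero] at hint

lemma discConv_eq_self_of_le {dx H : ℝ} {η : ℝ → ℝ} (hH : 0 < H) (hHdx : H ≤ dx)
    (hη : η 0 ≠ 0) (f : ℤ → ℝ) : discConv dx H η f = f := by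
  have hdx : 0 < dx := hH.trans_le hHdx
  have hN : ⌈H / dx⌉₊ = 1 := Nat.ceil_eq_iff one_ne_zero |>.2
    ⟨by simpa using div_pos hH hdx, by simpa using div_le_one_of_le₀ hHdx hdx.le⟩
  funext j
  simp [discConv, hN, mul_div_assoc, div_self (div_ne_zero hη hH.ne')]

lemma nlocIter_eq_locIter_of_le {dx dt H : ℝ} {η : ℝ → ℝ} (hH : 0 < H) (hHdx : H ≤ dx)
    (hη : η 0 ≠ 0) (U0 : ℤ → ℝ) (m : ℕ) : nlocIter dx dt H η U0 m = locIter dx dt U0 m := by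
  induction m with
  | zero => rfl
  | succ m ih => simp only [nlocIter, locIter, discConv_eq_self_of_le hH hHdx hη, ih]

lemma Gnloc_eq_Gloc_of_le {dx H T : ℝ} {η : ℝ → ℝ} (hH : 0 < H) (hHdx : H ≤ dx)
    (hη : η 0 ≠ 0) (J : (ℝ → ℝ) → ℝ) (Kt : (ℝ → ℝ → ℝ) → ℝ) (I : (ℝ → ℝ) → ℝ) :
    Gnloc dx H T η J Kt I = Gloc dx T J Kt I := by
  have : nlocSol dx H η = locSol dx := by
    funext U t x
    simp only [nlocSol, locSol, nlocIter_eq_locIter_of_le hH hHdx hη]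
  funext U
  simp only [Gnloc, Gloc, this]

lemma elStep_denom_pos {dx : ℝ} (hdx : 0 < dx) {a b : ℝ} (ha : a ∈ Icc (0 : ℝ) 1)
    (hb : b ∈ Icc (0 : ℝ) 1) : 0 < dx + dx / 8 * ((1 - b) - (1 - a)) := by
  nlinarith [ha.1, hb.2]

lemma elStep_mem_Icc {dx : ℝ} (hdx : 0 < dx) {U : ℤ → ℝ} (hU : ∀ j, U j ∈ Icc (0 : ℝ) 1)
    (j : ℤ) : elStep dx (dx / 8) U (fun i => 1 - U i) j ∈ Icc (0 : ℝ) 1 := by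
  obtain ⟨ha0, ha1⟩ := hU (j - 1)
  obtain ⟨hb0, hb1⟩ := hU j
  obtain ⟨hc0, hc1⟩ := hU (j + 1)
  rw [elStep]
  generalize U (j - 1) = a at *
  generalize U j = b at *
  generalize U (j + 1) = c at *
  have hD₁ : dx + dx / 8 * ((1 - b) - (1 - a)) = dx * (8 + a - b) / 8 := by ring
  have hD₂ : dx + dx / 8 * ((1 - c) - (1 - b)) = dx * (8 + b - c) / 8 := by ring
  have hab : 0 < 8 + a - b := by linarith
  have hbc : 0 < 8 + b - c := by linarith
  have hformula : (a + 2 * b + c) / 4 + dx / 8 / 4 *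
      ((b + a) * (1 - b + (1 - a)) / (dx * (8 + a - b) / 8)
        - (c + b) * (1 - c + (1 - b)) / (dx * (8 + b - c) / 8)) =
      ((a + 2 * b + c) * ((8 + a - b) * (8 + b - c))
        + ((a + b) * (2 - a - b) * (8 + b - c) - (b + c) * (2 - b - c) * (8 + a - b)))
        / (4 * ((8 + a - b) * (8 + b - c))) := by
    field_simp
    ring
  have ha' := sub_nonneg.2 ha1
  have hb' := sub_nonneg.2 hb1
  have hc' := sub_nonneg.2 hc1
  rw [hD₁, hD₂, hformula, mem_Icc, div_le_one (by positivity)]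
  constructor
  · apply div_nonneg _ (by positivity)
    nlinarith [mul_nonneg ha0 hb0, mul_nonneg hb0 hc0, mul_nonneg ha0 hc0,
      mul_nonneg (mul_nonneg ha0 hb0) hc0, sq_nonneg (a - b), sq_nonneg (b - c), sq_nonneg (a - c),
      mul_nonneg ha0 hb', mul_nonneg hb0 hc', mul_nonneg hc0 ha', mul_nonneg hb0 ha',
      mul_nonneg hc0 hb', mul_nonneg ha0 hc']
  · nlinarith [mul_nonneg ha0 hb0, mul_nonneg hb0 hc0, mul_nonneg ha0 hc0,
      mul_nonneg (mul_nonneg ha0 hb0) hc0, sq_nonneg (a - b), sq_nonneg (b - c), sq_nonneg (a - c),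
      mul_nonneg ha0 hb', mul_nonneg hb0 hc', mul_nonneg hc0 ha', mul_nonneg hb0 ha',
      mul_nonneg hc0 hb', mul_nonneg ha0 hc', mul_nonneg ha' hb', mul_nonneg hb' hc',
      mul_nonneg ha' hc']

lemma locIter_mem_Icc {dx : ℝ} (hdx : 0 < dx) {U : ℤ → ℝ} (hU : ∀ j, U j ∈ Icc (0 : ℝ) 1)
    (m : ℕ) (j : ℤ) : locIter dx (dx / 8) U m j ∈ Icc (0 : ℝ) 1 := by
  induction m generalizing j with
  | zero => exact hU j
  | succ m ih => exact elStep_mem_Icc hdx ih j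

lemma continuousAt_elStep {dx : ℝ} (hdx : 0 < dx) {U : ℤ → ℝ} (hU : ∀ j, U j ∈ Icc (0 : ℝ) 1)
    (j : ℤ) : ContinuousAt (fun V : ℤ → ℝ => elStep dx (dx / 8) V (fun i => 1 - V i) j) U := by
  have h₁ := (elStep_denom_pos hdx (hU (j - 1)) (hU j)).ne'
  have h₂ := (elStep_denom_pos hdx (hU j) (hU (j + 1))).ne'
  unfold elStep
  fun_prop (disch := assumption)

lemma continuousAt_locIter {dx : ℝ} (hdx : 0 < dx) {U : ℤ → ℝ}
    (hU : ∀ j, U j ∈ Icc (0 : ℝ) 1) (m : ℕ) :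
    ContinuousAt (fun V => locIter dx (dx / 8) V m) U := by
  induction m with
  | zero => exact continuousAt_id
  | succ m ih =>
    exact (continuousAt_pi.2 fun j => continuousAt_elStep hdx (locIter_mem_Icc hdx hU m) j).comp
      (f := fun V => locIter dx (dx / 8) V m) ih

lemma locSol_mem_Icc {dx : ℝ} (hdx : 0 < dx) {U : ℝ → ℝ} (hU : ∀ x, U x ∈ Icc (0 : ℝ) 1)
    (t x : ℝ) : locSol dx U t x ∈ Icc (0 : ℝ) 1 :=
  locIter_mem_Icc hdx (fun _ => hU _) _ _

lemma tendsto_locSol {ι : Type*} {l : Filter ι} {dx : ℝ} (hdx : 0 < dx) {u : ι → ℝ → ℝ}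
    {U : ℝ → ℝ} (hU : ∀ x, U x ∈ Icc (0 : ℝ) 1)
    (hlim : ∀ x, Tendsto (fun k => u k x) l (𝓝 (U x))) (t x : ℝ) :
    Tendsto (fun k => locSol dx (u k) t x) l (𝓝 (locSol dx U t x)) :=
  (continuous_apply (cellIdx dx x)).continuousAt.tendsto.comp <|
    (continuousAt_locIter hdx (fun _ => hU _) _).tendsto.comp <|
      tendsto_pi_nhds.2 fun _ => hlim _

lemma cellIdx_eq_iff {dx : ℝ} (hdx : 0 < dx) {x : ℝ} {j : ℤ} :
    cellIdx dx x = j ↔ x ∈ Ico ((j - 1 / 2) * dx) ((j + 1 / 2) * dx) := by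
  rw [cellIdx, Int.floor_eq_iff, mem_Ico, ← le_div_iff₀ hdx, ← div_lt_iff₀ hdx]
  constructor <;> rintro ⟨h₁, h₂⟩ <;> constructor <;> linarith

lemma measurable_cellIdx (dx : ℝ) : Measurable (cellIdx dx) :=
  ((measurable_id.div_const dx).add_const _).floor

lemma measurable_uncurry_locSol (dx : ℝ) (U : ℝ → ℝ) : Measurable (uncurry (locSol dx U)) :=
  (measurable_of_countable fun p : ℕ × ℤ => locIter dx (dx / 8) _ p.1 p.2).comp
    (((measurable_fst.div_const _).nat_floor).prodMk ((measurable_cellIdx dx).comp measurable_snd))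

section Admissible

variable {dx M : ℝ} {K : Set ℝ}

lemma apply_eq_apply_cellIdx_of_mem_Uad (hdx : 0 < dx) {U : ℝ → ℝ} (hU : U ∈ Uad dx M K) (x : ℝ) :
    U x = U (cellIdx dx x * dx) :=
  hU.2.1 _ x ((cellIdx_eq_iff hdx).1 rfl)

lemma measurable_of_mem_Uad (hdx : 0 < dx) {U : ℝ → ℝ} (hU : U ∈ Uad dx M K) : Measurable U := by
  rw [funext (apply_eq_apply_cellIdx_of_mem_Uad hdx hU)]
  exact (measurable_of_countable fun j : ℤ => U (j * dx)).comp (measurable_cellIdx dx)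

lemma mem_Uad_of_tendsto {u : ℕ → ℝ → ℝ} {U : ℝ → ℝ} (hu : ∀ n, u n ∈ Uad dx M K)
    (hlim : ∀ x, Tendsto (fun n => u n x) atTop (𝓝 (U x))) : U ∈ Uad dx M K := by
  refine ⟨fun x => isClosed_Icc.mem_of_tendsto (hlim x) (.of_forall fun n => (hu n).1 x),
    fun j x hx => tendsto_nhds_unique (hlim x) ?_, ?_, ?_⟩
  · simpa only [(hu _).2.1 j x hx] using hlim (j * dx)
  · by_contra! hM
    obtain ⟨n, hn⟩ := (eVariationOn.lowerSemicontinuous_aux (fun x _ => hlim x) hM).exists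
    exact (hu n).2.2.1.not_gt hn
  · refine support_subset_iff'.2 fun x hx => tendsto_nhds_unique (hlim x) ?_
    simpa only [support_subset_iff'.1 (hu _).2.2.2 x hx] using tendsto_const_nhds

lemma exists_subseq_tendsto_of_mem_Uad (hdx : 0 < dx) {u : ℕ → ℝ → ℝ}
    (hu : ∀ n, u n ∈ Uad dx M K) : ∃ φ : ℕ → ℕ, StrictMono φ ∧ ∃ U ∈ Uad dx M K,
      ∀ x, Tendsto (fun k => u (φ k) x) atTop (𝓝 (U x)) := by
  obtain ⟨a, -, φ, hφ, ha⟩ := (isCompact_univ_pi fun _ : ℤ => isCompact_Icc).tendsto_subseq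
    (x := fun n (j : ℤ) => u n (j * dx))
    fun n j _ => show u n (j * dx) ∈ Icc (0 : ℝ) 1 from (hu n).1 _
  have hlim : ∀ x, Tendsto (fun k => u (φ k) x) atTop (𝓝 (a (cellIdx dx x))) := fun x =>
    (tendsto_pi_nhds.1 ha (cellIdx dx x)).congr fun k =>
      (apply_eq_apply_cellIdx_of_mem_Uad hdx (hu (φ k)) x).symm
  exact ⟨φ, hφ, _, mem_Uad_of_tendsto (fun k => hu (φ k)) hlim, hlim⟩

end Admissible

lemma L1locConv_of_tendsto {f : ℕ → ℝ → ℝ} {g : ℝ → ℝ} {C : ℝ} (hf : ∀ n, Measurable (f n))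
    (hg : Measurable g) (hbd : ∀ n x, |f n x - g x| ≤ C)
    (hlim : ∀ x, Tendsto (fun n => f n x) atTop (𝓝 (g x))) : L1locConv f g := fun R _ => by
  simpa using intervalIntegral.tendsto_integral_filter_of_dominated_convergence (μ := volume)
    (f := fun _ => 0) (fun _ => C)
    (.of_forall fun n => ((hf n).sub hg).abs.aestronglyMeasurable)
    (.of_forall fun n => ae_of_all _ fun x _ => by simpa using hbd n x)
    intervalIntegrable_const
    (ae_of_all _ fun x _ => by simpa using ((hlim x).sub_const (g x)).abs)

lemma L1locConvT_of_tendsto {T C : ℝ} {f : ℕ → ℝ → ℝ → ℝ} {g : ℝ → ℝ → ℝ}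
    (hf : ∀ n, Measurable (uncurry (f n))) (hg : Measurable (uncurry g))
    (hbd : ∀ n t x, |f n t x - g t x| ≤ C)
    (hlim : ∀ t x, Tendsto (fun n => f n t x) atTop (𝓝 (g t x))) : L1locConvT T f g :=
  fun R hR => by
  have hsm : ∀ n, StronglyMeasurable (uncurry fun t x => |f n t x - g t x|) :=
    fun n => ((hf n).sub hg).abs.stronglyMeasurable
  simpa using intervalIntegral.tendsto_integral_filter_of_dominated_convergence
    (F := fun n t => ∫ x in -R..R, |f n t x - g t x|) (fun _ => C * |R - -R|)
    (.of_forall fun n => ((hsm n).integral_prod_right (ν := volume.restrict (Ioc (-R) R))).sub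
      ((hsm n).integral_prod_right (ν := volume.restrict (Ioc R (-R)))) |>.aestronglyMeasurable)
    (.of_forall fun n => ae_of_all _ fun t _ =>
      intervalIntegral.norm_integral_le_of_norm_le_const fun x _ => by simpa using hbd n t x)
    intervalIntegrable_const
    (ae_of_all _ fun t _ => L1locConv_of_tendsto (fun n => (hf n).comp measurable_prodMk_left)
      (hg.comp measurable_prodMk_left) (fun n => hbd n t) (hlim t) R hR)

lemma tendsto_integral_abs_sub_of_L1locConv {K : Set ℝ} (hK : IsCompact K) {f : ℕ → ℝ → ℝ}
    {g : ℝ → ℝ} (hf : ∀ n, support (f n) ⊆ K) (hg : support g ⊆ K) (h : L1locConv f g) :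
    Tendsto (fun n => ∫ x, |f n x - g x|) atTop (𝓝 0) := by
  obtain ⟨R, hR, hKR⟩ := hK.isBounded.subset_ball_lt 0 0
  refine (h R hR).congr fun n => ?_
  rw [intervalIntegral.integral_of_le (by linarith)]
  refine setIntegral_eq_integral_of_forall_compl_eq_zero fun x hx => ?_
  have hxK : x ∉ K := fun hxK => hx (Ioo_subset_Ioc_self (abs_lt.1 (by simpa using hKR hxK)))
  simp [support_subset_iff'.1 (hf n) x hxK, support_subset_iff'.1 hg x hxK]

section LocalSolutions

variable {dx : ℝ} (hdx : 0 < dx) {u : ℕ → ℝ → ℝ} {U : ℝ → ℝ}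
  (hu : ∀ n x, u n x ∈ Icc (0 : ℝ) 1) (hU : ∀ x, U x ∈ Icc (0 : ℝ) 1)
  (hlim : ∀ x, Tendsto (fun n => u n x) atTop (𝓝 (U x)))
include hdx hu hU

lemma abs_locSol_sub_locSol_le_one (n : ℕ) (t x : ℝ) :
    |locSol dx (u n) t x - locSol dx U t x| ≤ 1 := by
  obtain ⟨h₁, h₂⟩ := locSol_mem_Icc hdx (hu n) t x
  obtain ⟨h₃, h₄⟩ := locSol_mem_Icc hdx hU t x
  exact abs_sub_le_of_nonneg_of_le h₁ h₂ h₃ h₄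

include hlim

lemma L1locConv_locSol (t : ℝ) :
    L1locConv (fun n x => locSol dx (u n) t x) (fun x => locSol dx U t x) :=
  L1locConv_of_tendsto (fun _ => (measurable_uncurry_locSol dx _).comp measurable_prodMk_left)
    ((measurable_uncurry_locSol dx _).comp measurable_prodMk_left)
    (fun n => abs_locSol_sub_locSol_le_one hdx hu hU n t) (tendsto_locSol hdx hU hlim t)

lemma L1locConvT_locSol (T : ℝ) : L1locConvT T (fun n => locSol dx (u n)) (locSol dx U) :=
  L1locConvT_of_tendsto (fun _ => measurable_uncurry_locSol dx _) (measurable_uncurry_locSol dx _)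
    (abs_locSol_sub_locSol_le_one hdx hu hU) (tendsto_locSol hdx hU hlim)

end LocalSolutions

lemma add_add_le_of_tendsto_of_le_liminf {a b c : ℕ → ℝ} {A B C m : ℝ}
    (ha : Tendsto a atTop (𝓝 A)) (hb : Tendsto b atTop (𝓝 B)) (hc : C ≤ liminf c atTop)
    (hsum : ∀ᶠ k in atTop, a k + b k + c k = m) : A + B + C ≤ m := by
  have hc' : Tendsto c atTop (𝓝 (m - A - B)) :=
    ((tendsto_const_nhds.sub ha).sub hb).congr' (hsum.mono fun k hk => by linarith)
  linarith [hc'.liminf_eq ▸ hc]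

theorem stmt15_general (dx T MΔ : ℝ) (hdx : 0 < dx)
    (K : Set ℝ) (hK : IsCompact K)
    (η : ℝ → ℝ) (hη : KernelOK η)
    (J I : (ℝ → ℝ) → ℝ) (Kt : (ℝ → ℝ → ℝ) → ℝ)
    (hJcont : ∀ (fn : ℕ → ℝ → ℝ) (f : ℝ → ℝ), L1locConv fn f →
      Tendsto (fun n => J (fn n)) atTop (nhds (J f)))
    (hKtcont : ∀ (fn : ℕ → ℝ → ℝ → ℝ) (f : ℝ → ℝ → ℝ), L1locConvT T fn f →
      Tendsto (fun n => Kt (fn n)) atTop (nhds (Kt f)))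
    (hIlsc : ∀ (fn : ℕ → ℝ → ℝ) (f : ℝ → ℝ), L1locConv fn f →
      I f ≤ liminf (fun n => I (fn n)) atTop)
    (Hn : ℕ → ℝ) (hHn : ∀ n, 0 < Hn n) (hHn0 : Tendsto Hn atTop (nhds 0))
    (Un : ℕ → ℝ → ℝ) (hUn : ∀ n, Un n ∈ Uad dx MΔ K)
    (hUnmin : ∀ n, ∀ U' ∈ Uad dx MΔ K,
      Gnloc dx (Hn n) T η J Kt I (Un n) ≤ Gnloc dx (Hn n) T η J Kt I U') :
    ∃ φ : ℕ → ℕ, StrictMono φ ∧ ∃ Uo ∈ Uad dx MΔ K,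
      Tendsto (fun k => ∫ x : ℝ, |Un (φ k) x - Uo x|) atTop (nhds 0) ∧
      ∀ U' ∈ Uad dx MΔ K, Gloc dx T J Kt I Uo ≤ Gloc dx T J Kt I U' := by
  obtain ⟨N, hN⟩ := eventually_atTop.1 (hHn0.eventually_lt_const hdx)
  have hmin : ∀ n ≥ N, IsMinOn (Gloc dx T J Kt I) (Uad dx MΔ K) (Un n) :=
    fun n hn => isMinOn_iff.2 fun U hU => by
      simpa only [Gnloc_eq_Gloc_of_le (hHn n) (hN n hn).le hη.apply_zero_pos.ne'] using
        hUnmin n U hU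
  obtain ⟨φ, hφ, Uo, hUo, hlim⟩ := exists_subseq_tendsto_of_mem_Uad hdx hUn
  have hUn01 : ∀ k x, Un (φ k) x ∈ Icc (0 : ℝ) 1 := fun k => (hUn (φ k)).1
  have hconv : L1locConv (fun k => Un (φ k)) Uo :=
    L1locConv_of_tendsto (fun k => measurable_of_mem_Uad hdx (hUn _))
      (measurable_of_mem_Uad hdx hUo) (fun k x => abs_sub_le_of_nonneg_of_le
        (hUn01 k x).1 (hUn01 k x).2 (hUo.1 x).1 (hUo.1 x).2) hlim
  refine ⟨φ, hφ, Uo, hUo, tendsto_integral_abs_sub_of_L1locConv hK (fun k => (hUn _).2.2.2)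
    hUo.2.2.2 hconv, fun U hU => ?_⟩
  calc Gloc dx T J Kt I Uo ≤ Gloc dx T J Kt I (Un N) :=
        add_add_le_of_tendsto_of_le_liminf
          (hJcont _ _ (L1locConv_locSol hdx hUn01 hUo.1 hlim T))
          (hKtcont _ _ (L1locConvT_locSol hdx hUn01 hUo.1 hlim T))
          (hIlsc _ _ hconv)
          (eventually_atTop.2 ⟨N, fun k hk =>
            le_antisymm (hmin _ (hk.trans hφ.le_apply) (hUn N)) (hmin N le_rfl (hUn _))⟩)
    _ ≤ Gloc dx T J Kt I U := hmin N le_rfl hU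

/-- Convergence of minimizers for the discrete control
problems in the nonlocal-to-local limit: if `H_n → 0⁺` and `U_o^n` minimizes
`G_{Δ,H_n}` over `U_{Δ,ad}`, then a subsequence of `(U_o^n)` converges in
`L¹(ℝ)` to a minimizer of `G_Δ` over `U_{Δ,ad}`. -/
theorem stmt15 (dx T MΔ : ℝ) (hdx : 0 < dx) (hT : 0 < T)
    (hTmul : ∃ m : ℕ, T = (m : ℝ) * (dx / 8)) (hMΔ : 0 < MΔ)
    (K : Set ℝ) (hK : IsCompact K)
    (η : ℝ → ℝ) (hη : KernelOK η)
    (J I : (ℝ → ℝ) → ℝ) (Kt : (ℝ → ℝ → ℝ) → ℝ)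
    (hJ0 : ∀ f, 0 ≤ J f) (hKt0 : ∀ f, 0 ≤ Kt f) (hI0 : ∀ f, 0 ≤ I f)
    (hJcont : ∀ (fn : ℕ → ℝ → ℝ) (f : ℝ → ℝ), L1locConv fn f →
      Tendsto (fun n => J (fn n)) atTop (nhds (J f)))
    (hKtcont : ∀ (fn : ℕ → ℝ → ℝ → ℝ) (f : ℝ → ℝ → ℝ), L1locConvT T fn f →
      Tendsto (fun n => Kt (fn n)) atTop (nhds (Kt f)))
    (hIlsc : ∀ (fn : ℕ → ℝ → ℝ) (f : ℝ → ℝ), L1locConv fn f →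
      I f ≤ liminf (fun n => I (fn n)) atTop)
    (Hn : ℕ → ℝ) (hHn : ∀ n, 0 < Hn n) (hHn0 : Tendsto Hn atTop (nhds 0))
    (Un : ℕ → ℝ → ℝ) (hUn : ∀ n, Un n ∈ Uad dx MΔ K)
    (hUnmin : ∀ n, ∀ U' ∈ Uad dx MΔ K,
      Gnloc dx (Hn n) T η J Kt I (Un n) ≤ Gnloc dx (Hn n) T η J Kt I U') :
    ∃ φ : ℕ → ℕ, StrictMono φ ∧ ∃ Uo ∈ Uad dx MΔ K,
      Tendsto (fun k => ∫ x : ℝ, |Un (φ k) x - Uo x|) atTop (nhds 0) ∧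
      ∀ U' ∈ Uad dx MΔ K, Gloc dx T J Kt I Uo ≤ Gloc dx T J Kt I U' :=
  stmt15_general dx T MΔ hdx K hK η hη J I Kt hJcont hKtcont hIlsc Hn hHn hHn0 Un hUn hUnmin
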